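/- arXiv:1905.11915 — 2 statements merged into one kernel-verified Lean document; each statement's English description precedes it below -/
import Mathlib

section
/- Let r ≥ 3, s > r, and let (V, R) be a finite K^r_s-free r-uniform hypergraph. Let χ : V → Fin (r−1) be any coloring, and let Σ be the set of (r−1)-element subsets of V on which χ is injective. Form the r-uniform hypergraph (V ∪ {v*}, R') where v* ∉ V and R' = R ∪ {σ ∪ {v*} : σ ∈ Σ}. Then (V ∪ {v*}, R') is K^r_s-free. -/
/-!
An `s`-set avoiding `v*` lies in `V`, where `R` already misses an `r`-subset. An `s`-set
through `v*` meets `V` in `s - 1 ≥ r` vertices, so two of them share a colour under the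
`r - 1` colours of `χ`; any `(r - 1)`-set containing both is not split by `χ`, and together
with `v*` it is an `r`-subset that is not an edge. In other words, the link of `v*` is
`K^{r-1}_{s-1}`-free.
-/

open Finset

section OnePointExtension

variable {V : Type*}

def IsCliqueFree (R : Finset V → Prop) (r s : ℕ) : Prop :=
  ∀ A : Finset V, #A = s → ∃ σ ⊆ A, #σ = r ∧ ¬ R σ

def onePointExtension [DecidableEq V] (R P : Finset V → Prop) (τ : Finset (Option V)) :
    Prop :=
  (∃ σ, τ = σ.image some ∧ R σ) ∨ (∃ σ, P σ ∧ τ = insert none (σ.image some))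

section Extension

variable [DecidableEq V] {R P : Finset V → Prop}

lemma none_notMem_image_some (σ : Finset V) : none ∉ σ.image some := by
  simp

lemma card_image_some (σ : Finset V) : #(σ.image some) = #σ :=
  card_image_of_injective σ (Option.some_injective V)

lemma image_some_eraseNone_subset (A : Finset (Option V)) : A.eraseNone.image some ⊆ A :=
  image_some_eraseNone A ▸ erase_subset none A

lemma onePointExtension_image_some (σ : Finset V) :
    onePointExtension R P (σ.image some) ↔ R σ := by
  refine ⟨?_, fun h => .inl ⟨σ, rfl, h⟩⟩
  rintro (⟨σ', heq, hσ'⟩ | ⟨σ', -, heq⟩)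
  · rwa [image_injective (Option.some_injective V) heq]
  · exact absurd (heq ▸ mem_insert_self _ _) (none_notMem_image_some σ)

lemma onePointExtension_insert_none (σ : Finset V) :
    onePointExtension R P (insert none (σ.image some)) ↔ P σ := by
  refine ⟨?_, fun h => .inr ⟨σ, h, rfl⟩⟩
  rintro (⟨σ', heq, -⟩ | ⟨σ', hσ', heq⟩)
  · exact absurd (heq ▸ mem_insert_self _ _) (none_notMem_image_some σ')
  · have himage := congrArg (·.erase none) heq
    simp only [erase_insert (none_notMem_image_some _)] at himage
    rwa [image_injective (Option.some_injective V) himage]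

theorem IsCliqueFree.onePointExtension {r s : ℕ} (hr : 1 ≤ r) (hR : IsCliqueFree R r s)
    (hP : IsCliqueFree P (r - 1) (s - 1)) : IsCliqueFree (onePointExtension R P) r s := by
  intro A hA
  by_cases hnone : none ∈ A
  · obtain ⟨σ, hσA, hσ, hPσ⟩ := hP A.eraseNone (by rw [card_eraseNone_of_mem hnone, hA])
    refine ⟨insert none (σ.image some), ?_, ?_, (onePointExtension_insert_none σ).not.mpr hPσ⟩
    · exact insert_subset hnone ((image_subset_image hσA).trans (image_some_eraseNone_subset A))
    · rw [card_insert_of_notMem (none_notMem_image_some σ), card_image_some, hσ]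
      omega
  · obtain ⟨σ, hσA, hσ, hRσ⟩ := hR A.eraseNone (by rw [card_eraseNone_of_not_mem hnone, hA])
    refine ⟨σ.image some, ?_, by rw [card_image_some, hσ],
      (onePointExtension_image_some σ).not.mpr hRσ⟩
    exact (image_subset_image hσA).trans (image_some_eraseNone_subset A)

end Extension

theorem isCliqueFree_injOn [DecidableEq V] {W : Type*} [Fintype W] (χ : V → W) {m n : ℕ}
    (hm : 2 ≤ m) (hmn : m ≤ n) (hW : Fintype.card W < n) :
    IsCliqueFree (fun σ : Finset V => #σ = m ∧ Set.InjOn χ ↑σ) m n := by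
  intro B hB
  obtain ⟨x, hx, y, hy, hxy, hχ⟩ : ∃ x ∈ B, ∃ y ∈ B, x ≠ y ∧ χ x = χ y :=
    exists_ne_map_eq_of_card_lt_of_maps_to (t := univ) (by rwa [card_univ, hB])
      fun _ _ => mem_univ _
  obtain ⟨σ, hxyσ, hσB, hσ⟩ := exists_subsuperset_card_eq (n := m)
    (insert_subset hx (singleton_subset_iff.mpr hy)) (by rwa [card_pair hxy]) (by rwa [hB])
  refine ⟨σ, hσB, hσ, fun ⟨_, hinj⟩ => hxy (hinj ?_ ?_ hχ)⟩
  · exact hxyσ (mem_insert_self x {y})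
  · exact hxyσ (mem_insert_of_mem (mem_singleton_self y))

end OnePointExtension

theorem one_point_extension_free_general {V : Type*} [DecidableEq V] (r s : ℕ) (hr : 3 ≤ r) (hs : r < s)
    (R : Finset V → Prop)
    (hfree : ∀ A : Finset V, A.card = s → ∃ σ ⊆ A, σ.card = r ∧ ¬ R σ)
    (χ : V → Fin (r - 1))
    (R' : Finset (Option V) → Prop)
    (hR' : ∀ τ : Finset (Option V), R' τ ↔
      ((∃ σ : Finset V, τ = σ.image some ∧ R σ) ∨
        (∃ σ : Finset V, σ.card = r - 1 ∧ Set.InjOn χ ↑σ ∧ τ = insert none (σ.image some)))) :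
    ∀ A : Finset (Option V), A.card = s → ∃ τ ⊆ A, τ.card = r ∧ ¬ R' τ := by
  have hR'_eq : R' = onePointExtension R (fun σ : Finset V => #σ = r - 1 ∧ Set.InjOn χ ↑σ) := by
    funext τ
    simp only [hR', onePointExtension, and_assoc]
  have hlink : IsCliqueFree (fun σ : Finset V => #σ = r - 1 ∧ Set.InjOn χ ↑σ) (r - 1) (s - 1) :=
    isCliqueFree_injOn χ (by omega) (by omega) (by rw [Fintype.card_fin]; omega)
  rw [hR'_eq]
  exact IsCliqueFree.onePointExtension (by omega) hfree hlink

/-- Adding a new vertex `v*` (here `none`) to a `K^r_s`-free `r`-graph, with new edges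
`σ ∪ {v*}` exactly for the `(r-1)`-sets `σ` split by a coloring `χ : V → Fin (r-1)`,
yields a `K^r_s`-free `r`-graph. -/
theorem one_point_extension_free {V : Type*} [DecidableEq V] (r s : ℕ) (hr : 3 ≤ r) (hs : r < s)
    (R : Finset V → Prop) (hRcard : ∀ σ, R σ → σ.card = r)
    (hfree : ∀ A : Finset V, A.card = s → ∃ σ ⊆ A, σ.card = r ∧ ¬ R σ)
    (χ : V → Fin (r - 1))
    (R' : Finset (Option V) → Prop)
    (hR' : ∀ τ : Finset (Option V), R' τ ↔
      ((∃ σ : Finset V, τ = σ.image some ∧ R σ) ∨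
        (∃ σ : Finset V, σ.card = r - 1 ∧ Set.InjOn χ ↑σ ∧ τ = insert none (σ.image some)))) :
    ∀ A : Finset (Option V), A.card = s → ∃ τ ⊆ A, τ.card = r ∧ ¬ R' τ :=
  one_point_extension_free_general r s hr hs R hfree χ R' hR'
end

section
/- Fix r ≥ 3 and let ε_r = (r−1)!/(r−1)^{r−1}. Let (V, R) be a K^r_s-free r-uniform hypergraph (s > r), and let ā¹, …, āⁿ be tuples in V^{r−1}. Then there is a coloring-based construction producing a new vertex b (in a one-point K^r_s-free extension) such that the number of indices t ∈ [n] for which either the tuple āᵗ has a repeated coordinate or {a^t_1, …, a^t_{r−1}, b} forms an edge is at least ε_r · n. -/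
open scoped Classical

/-- Extend a coloring of a finite vertex set `S` to all of `V` by a default color. -/
noncomputable def extCol {V : Type*} [DecidableEq V] (k : ℕ) (S : Finset V) (d : Fin k)
    (c : ↥S → Fin k) : V → Fin k :=
  fun v => if h : v ∈ S then c ⟨v, h⟩ else d

/-- Pull a finite set of `Option V` back to `V` along `some`. -/
noncomputable def pullV {V : Type*} (τ : Finset (Option V)) : Finset V :=
  τ.preimage some ((Option.some_injective V).injOn)

lemma mem_pullV {V : Type*} {τ : Finset (Option V)} {x : V} : x ∈ pullV τ ↔ some x ∈ τ :=
  Finset.mem_preimage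

lemma pullV_image {V : Type*} [DecidableEq V] (σ : Finset V) : pullV (σ.image some) = σ := by
  ext x; simp [mem_pullV]

lemma image_pullV {V : Type*} [DecidableEq V] {τ : Finset (Option V)} (h : none ∉ τ) :
    (pullV τ).image some = τ := by
  ext o
  rcases o with _ | v
  · simp [h]
  · simp [mem_pullV]

lemma card_pullV {V : Type*} [DecidableEq V] {τ : Finset (Option V)} (h : none ∉ τ) :
    (pullV τ).card = τ.card := by
  conv_rhs => rw [← image_pullV h]
  rw [Finset.card_image_of_injective _ (Option.some_injective V)]

/-- Counting colorings of `S` that are injective (rainbow) on a `k`-subset `T`. -/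
lemma count_rainbow {V : Type*} [DecidableEq V] (k : ℕ) (S T : Finset V)
    (hTS : T ⊆ S) (hT : T.card = k) (d : Fin k) :
    k.factorial * k ^ (S.card - k) ≤
      ((Finset.univ : Finset (↥S → Fin k)).filter
        (fun c => (T.image (extCol k S d c)).card = k)).card := by
  classical
  have e : ↥T ≃ Fin k := Fintype.equivFinOfCardEq (by simp [hT])
  set P : (↥S → Fin k) → Prop := fun c => (T.image (extCol k S d c)).card = k with hP
  let f : (Fin k ↪ Fin k) × (↥(S \ T) → Fin k) → (↥S → Fin k) := fun p x =>
    if h : ↑x ∈ T then p.1 (e ⟨↑x, h⟩) else p.2 ⟨↑x, Finset.mem_sdiff.mpr ⟨x.2, h⟩⟩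
  have hfT : ∀ p (v : V) (hv : v ∈ T), extCol k S d (f p) v = p.1 (e ⟨v, hv⟩) := by
    intro p v hv
    have hvS : v ∈ S := hTS hv
    simp only [extCol, dif_pos hvS, f, dif_pos hv]
  have hf1 : ∀ p, P (f p) := by
    intro p
    have hinj : Set.InjOn (extCol k S d (f p)) ↑T := by
      intro v hv w hw hvw
      rw [Finset.mem_coe] at hv hw
      rw [hfT p v hv, hfT p w hw] at hvw
      have := e.injective (p.1.injective hvw)
      exact congrArg Subtype.val this
    rw [hP]
    simp only
    rw [Finset.card_image_of_injOn hinj, hT]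
  have hf2 : Function.Injective f := by
    intro p q h
    have h1 : p.1 = q.1 := by
      refine Function.Embedding.ext fun i => ?_
      have hx : (↑(e.symm i) : V) ∈ T := (e.symm i).2
      have := congrFun h ⟨↑(e.symm i), hTS hx⟩
      simp only [f, dif_pos hx] at this
      simpa using this
    have h2 : p.2 = q.2 := by
      funext x
      have hx := Finset.mem_sdiff.mp x.2
      have := congrFun h ⟨↑x, hx.1⟩
      simp only [f, dif_neg hx.2] at this
      simpa using this
    exact Prod.ext h1 h2
  have hcard : Fintype.card ((Fin k ↪ Fin k) × (↥(S \ T) → Fin k))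
      = k.factorial * k ^ (S.card - k) := by
    rw [Fintype.card_prod, Fintype.card_embedding_eq, Fintype.card_fin,
      Nat.descFactorial_self, Fintype.card_fun, Fintype.card_fin, Fintype.card_coe,
      Finset.card_sdiff_of_subset hTS, hT]
  have hinj : Function.Injective (fun p => (⟨f p, hf1 p⟩ : {c : ↥S → Fin k // P c})) := by
    intro p q h
    exact hf2 (congrArg Subtype.val h)
  have := Fintype.card_le_of_injective _ hinj
  rwa [hcard, Fintype.card_subtype] at this

lemma exists_mul_ge_sum {α : Type*} [Fintype α] [Nonempty α] (f : α → ℕ) :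
    ∃ x : α, ∑ y, f y ≤ Fintype.card α * f x := by
  obtain ⟨x, -, hx⟩ := Finset.exists_max_image Finset.univ f
    ⟨Classical.arbitrary α, Finset.mem_univ _⟩
  refine ⟨x, ?_⟩
  have := Finset.sum_le_card_nsmul Finset.univ f (f x) (fun y _ => hx y (Finset.mem_univ y))
  simpa [Finset.card_univ, smul_eq_mul] using this

set_option maxHeartbeats 1000000 in
/-- Given a `K^r_s`-free `r`-graph and tuples `a¹,…,aⁿ ∈ V^{r-1}`, there is a one-point
`K^r_s`-free extension (new vertex `none`) such that for at least an
`ε_r = (r-1)!/(r-1)^{r-1}` fraction of the indices `t`, either `aᵗ` has a repeated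
coordinate or `{aᵗ_1,…,aᵗ_{r-1}, none}` is an edge. -/
theorem bad_indices_lower_bound {V : Type*} [DecidableEq V] (r s n : ℕ)
    (hr : 3 ≤ r) (hs : r < s)
    (R : Finset V → Prop) (hRcard : ∀ σ, R σ → σ.card = r)
    (hfree : ∀ A : Finset V, A.card = s → ∃ σ ⊆ A, σ.card = r ∧ ¬ R σ)
    (a : Fin n → Fin (r - 1) → V) :
    ∃ R' : Finset (Option V) → Prop,
      (∀ σ : Finset V, R' (σ.image some) ↔ R σ) ∧
      (∀ A : Finset (Option V), A.card = s → ∃ τ ⊆ A, τ.card = r ∧ ¬ R' τ) ∧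
      (((r - 1).factorial : ℝ) / ((r - 1 : ℕ) : ℝ) ^ (r - 1) * n ≤
        ((Finset.univ.filter (fun t : Fin n => ¬ Function.Injective (a t) ∨
          R' (insert none ((Finset.univ.image (a t)).image some)))).card : ℝ)) := by
  classical
  revert a
  set k := r - 1 with hkdef
  intro a
  have hk2 : 2 ≤ k := by omega
  have hk0 : 0 < k := by omega
  have hkr : k + 1 = r := by omega
  let d : Fin k := ⟨0, hk0⟩
  set S : Finset V := Finset.univ.biUnion (fun t : Fin n => Finset.univ.image (a t)) with hS
  set R' : (V → Fin k) → Finset (Option V) → Prop := fun cc τ =>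
    if none ∈ τ then τ.card = r ∧ ((pullV (τ.erase none)).image cc).card = k
    else R (pullV τ) with hR'
  -- Property 1 (for any coloring)
  have prop1 : ∀ cc (σ : Finset V), R' cc (σ.image some) ↔ R σ := by
    intro cc σ
    have hnone : none ∉ σ.image some := by simp
    rw [hR']
    simp only [if_neg hnone, pullV_image]
  -- Property 2 (for any coloring)
  have prop2 : ∀ cc (A : Finset (Option V)), A.card = s → ∃ τ ⊆ A, τ.card = r ∧ ¬ R' cc τ := by
    intro cc A hA
    by_cases hnone : none ∈ A
    · set B := pullV (A.erase none) with hB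
      have hnB : none ∉ A.erase none := Finset.notMem_erase _ _
      have hBcard : B.card = s - 1 := by
        rw [hB, card_pullV hnB, Finset.card_erase_of_mem hnone, hA]
      have hkB : (Finset.univ : Finset (Fin k)).card < B.card := by
        rw [Finset.card_univ, Fintype.card_fin, hBcard]; omega
      obtain ⟨x, hx, y, hy, hxy, hcxy⟩ :=
        Finset.exists_ne_map_eq_of_card_lt_of_maps_to hkB (fun v _ => Finset.mem_univ (cc v))
      have hpair : ({x, y} : Finset V) ⊆ B := by
        intro z hz
        rcases Finset.mem_insert.mp hz with rfl | hz
        · exact hx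
        · rw [Finset.mem_singleton.mp hz]; exact hy
      obtain ⟨σ, hσpair, hσB, hσcard⟩ := Finset.exists_subsuperset_card_eq (n := k) hpair
        (by rw [Finset.card_pair hxy]; exact hk2) (by rw [hBcard]; omega)
      have hxσ : x ∈ σ := hσpair (by simp)
      have hyσ : y ∈ σ := hσpair (by simp)
      have hnσ : none ∉ σ.image some := by simp
      refine ⟨insert none (σ.image some), ?_, ?_, ?_⟩
      · intro o ho
        rcases Finset.mem_insert.mp ho with rfl | ho
        · exact hnone
        · obtain ⟨v, hv, rfl⟩ := Finset.mem_image.mp ho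
          have : some v ∈ A.erase none := mem_pullV.mp (hσB hv)
          exact Finset.mem_of_mem_erase this
      · rw [Finset.card_insert_of_notMem hnσ,
          Finset.card_image_of_injective _ (Option.some_injective V), hσcard, hkr]
      · have hmem : none ∈ insert none (σ.image some) := Finset.mem_insert_self _ _
        rw [hR']
        simp only [if_pos hmem]
        rintro ⟨-, hcard⟩
        rw [Finset.erase_insert hnσ, pullV_image] at hcard
        have hsub : σ.image cc ⊆ (σ.erase x).image cc := by
          intro z hz
          obtain ⟨v, hv, rfl⟩ := Finset.mem_image.mp hz
          by_cases hvx : v = x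
          · refine Finset.mem_image.mpr ⟨y, Finset.mem_erase.mpr ⟨Ne.symm hxy, hyσ⟩, ?_⟩
            rw [hvx, hcxy]
          · exact Finset.mem_image.mpr ⟨v, Finset.mem_erase.mpr ⟨hvx, hv⟩, rfl⟩
        have h1 : (σ.image cc).card ≤ k - 1 := by
          calc (σ.image cc).card ≤ ((σ.erase x).image cc).card := Finset.card_le_card hsub
            _ ≤ (σ.erase x).card := Finset.card_image_le
            _ = k - 1 := by rw [Finset.card_erase_of_mem hxσ, hσcard]
        omega
    · set B := pullV A with hB
      have hBcard : B.card = s := by rw [hB, card_pullV hnone, hA]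
      obtain ⟨σ, hσB, hσcard, hσR⟩ := hfree B hBcard
      refine ⟨σ.image some, ?_, ?_, ?_⟩
      · intro o ho
        obtain ⟨v, hv, rfl⟩ := Finset.mem_image.mp ho
        exact mem_pullV.mp (hσB hv)
      · rw [Finset.card_image_of_injective _ (Option.some_injective V), hσcard]
      · rw [prop1]; exact hσR
  -- Counting part
  haveI : Nonempty (↥S → Fin k) := ⟨fun _ => d⟩
  set T : Fin n → Finset V := fun t => Finset.univ.image (a t) with hT
  have hTS : ∀ t, T t ⊆ S := fun t => Finset.subset_biUnion_of_mem _ (Finset.mem_univ t)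
  have hTcard : ∀ t, Function.Injective (a t) → (T t).card = k := by
    intro t ht
    rw [hT]
    simp only
    rw [Finset.card_image_of_injective _ ht, Finset.card_univ, Fintype.card_fin]
  set f : (↥S → Fin k) → ℕ := fun c =>
    (Finset.univ.filter (fun t : Fin n => Function.Injective (a t) ∧
      ((T t).image (extCol k S d c)).card = k)).card with hf
  set m := (Finset.univ.filter (fun t : Fin n => Function.Injective (a t))).card with hm
  have hsum : m * (k.factorial * k ^ (S.card - k)) ≤ ∑ c : ↥S → Fin k, f c := by
    have hswap : ∑ c : ↥S → Fin k, f c = ∑ t : Fin n,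
        ((Finset.univ : Finset (↥S → Fin k)).filter (fun c => Function.Injective (a t) ∧
          ((T t).image (extCol k S d c)).card = k)).card := by
      rw [hf]
      simp_rw [Finset.card_filter]
      exact Finset.sum_comm
    rw [hswap]
    have hterm : ∀ t ∈ Finset.univ.filter (fun t : Fin n => Function.Injective (a t)),
        k.factorial * k ^ (S.card - k) ≤
        ((Finset.univ : Finset (↥S → Fin k)).filter (fun c => Function.Injective (a t) ∧
          ((T t).image (extCol k S d c)).card = k)).card := by
      intro t ht
      have hinj := (Finset.mem_filter.mp ht).2
      refine le_trans (count_rainbow k S (T t) (hTS t) (hTcard t hinj) d)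
        (Finset.card_le_card ?_)
      intro c hc
      rw [Finset.mem_filter] at hc ⊢
      exact ⟨hc.1, hinj, hc.2⟩
    calc m * (k.factorial * k ^ (S.card - k))
        = (Finset.univ.filter (fun t : Fin n => Function.Injective (a t))).card
            • (k.factorial * k ^ (S.card - k)) := by rw [smul_eq_mul, hm]
      _ ≤ ∑ t ∈ Finset.univ.filter (fun t : Fin n => Function.Injective (a t)),
            ((Finset.univ : Finset (↥S → Fin k)).filter (fun c => Function.Injective (a t) ∧
              ((T t).image (extCol k S d c)).card = k)).card :=
          Finset.card_nsmul_le_sum _ _ _ hterm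
      _ ≤ ∑ t : Fin n,
            ((Finset.univ : Finset (↥S → Fin k)).filter (fun c => Function.Injective (a t) ∧
              ((T t).image (extCol k S d c)).card = k)).card :=
          Finset.sum_le_sum_of_subset (Finset.filter_subset _ _)
  obtain ⟨c0, hc0⟩ := exists_mul_ge_sum f
  have hCcard : Fintype.card (↥S → Fin k) = k ^ S.card := by
    rw [Fintype.card_fun, Fintype.card_fin, Fintype.card_coe]
  have key : m * (k.factorial * k ^ (S.card - k)) ≤ k ^ S.card * f c0 := by
    refine le_trans hsum ?_
    rw [← hCcard]
    exact hc0
  have hkpos : (0 : ℝ) < (k : ℝ) := by exact_mod_cast hk0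
  have hkkpos : (0 : ℝ) < (k : ℝ) ^ k := pow_pos hkpos k
  have hεm : (k.factorial : ℝ) / (k : ℝ) ^ k * m ≤ f c0 := by
    rcases Nat.eq_zero_or_pos m with hm0 | hmpos
    · rw [hm0]
      simp only [Nat.cast_zero, mul_zero]
      exact Nat.cast_nonneg _
    · have hkS : k ≤ S.card := by
        obtain ⟨t, ht⟩ := Finset.card_pos.mp hmpos
        have h1 := Finset.card_le_card (hTS t)
        rw [hTcard t (Finset.mem_filter.mp ht).2] at h1
        exact h1
      have hpow : k ^ S.card = k ^ k * k ^ (S.card - k) := by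
        rw [← pow_add]
        congr 1
        omega
      have hp : 0 < k ^ (S.card - k) := Nat.pow_pos hk0
      have h2 : (m * k.factorial) * (k ^ (S.card - k)) ≤ (k ^ k * f c0) * (k ^ (S.card - k)) := by
        calc (m * k.factorial) * k ^ (S.card - k)
            = m * (k.factorial * k ^ (S.card - k)) := by ring
          _ ≤ k ^ S.card * f c0 := key
          _ = (k ^ k * f c0) * k ^ (S.card - k) := by rw [hpow]; ring
      have h3 : m * k.factorial ≤ k ^ k * f c0 := Nat.le_of_mul_le_mul_right h2 hp
      have h4 : (m : ℝ) * (k.factorial : ℝ) ≤ (k : ℝ) ^ k * (f c0 : ℝ) := by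
        exact_mod_cast h3
      rw [div_mul_eq_mul_div, div_le_iff₀ hkkpos]
      nlinarith
  -- bridge between R' and rainbow condition
  have hbridge : ∀ t : Fin n, Function.Injective (a t) →
      (R' (extCol k S d c0) (insert none ((T t).image some)) ↔
        ((T t).image (extCol k S d c0)).card = k) := by
    intro t hinj
    have han : none ∉ (T t).image some := by simp
    have hmem : none ∈ insert none ((T t).image some) := Finset.mem_insert_self _ _
    rw [hR']
    simp only [if_pos hmem, Finset.erase_insert han, pullV_image]
    constructor
    · exact fun h => h.2
    · intro h
      refine ⟨?_, h⟩
      rw [Finset.card_insert_of_notMem han,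
        Finset.card_image_of_injective _ (Option.some_injective V), hTcard t hinj, hkr]
  refine ⟨R' (extCol k S d c0), prop1 _, prop2 _, ?_⟩
  -- final counting inequality
  set m' := (Finset.univ.filter (fun t : Fin n => ¬ Function.Injective (a t))).card with hm'
  have hmn : m + m' = n := by
    rw [hm, hm']
    rw [Finset.card_filter_add_card_filter_not]
    simp
  have hsubun : (Finset.univ.filter (fun t : Fin n => ¬ Function.Injective (a t))) ∪
      (Finset.univ.filter (fun t : Fin n => Function.Injective (a t) ∧
        ((T t).image (extCol k S d c0)).card = k)) ⊆
      (Finset.univ.filter (fun t : Fin n => ¬ Function.Injective (a t) ∨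
        R' (extCol k S d c0) (insert none ((Finset.univ.image (a t)).image some)))) := by
    intro t ht
    rcases Finset.mem_union.mp ht with ht | ht
    · exact Finset.mem_filter.mpr ⟨Finset.mem_univ _, Or.inl (Finset.mem_filter.mp ht).2⟩
    · have h1 := (Finset.mem_filter.mp ht).2
      exact Finset.mem_filter.mpr ⟨Finset.mem_univ _,
        Or.inr ((hbridge t h1.1).mpr h1.2)⟩
  have hdisj : Disjoint (Finset.univ.filter (fun t : Fin n => ¬ Function.Injective (a t)))
      (Finset.univ.filter (fun t : Fin n => Function.Injective (a t) ∧
        ((T t).image (extCol k S d c0)).card = k)) := by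
    rw [Finset.disjoint_left]
    intro t h1 h2
    exact (Finset.mem_filter.mp h1).2 (Finset.mem_filter.mp h2).2.1
  have hε1 : (k.factorial : ℝ) / (k : ℝ) ^ k ≤ 1 := by
    rw [div_le_one hkkpos]
    exact_mod_cast Nat.factorial_le_pow k
  have hnR : (n : ℝ) = (m : ℝ) + (m' : ℝ) := by exact_mod_cast hmn.symm
  have hm'0 : (0 : ℝ) ≤ (m' : ℝ) := Nat.cast_nonneg _
  have h2 : (k.factorial : ℝ) / (k : ℝ) ^ k * (m' : ℝ) ≤ (m' : ℝ) :=
    mul_le_of_le_one_left hm'0 hε1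
  have hfin : (k.factorial : ℝ) / (k : ℝ) ^ k * (n : ℝ) ≤ (m' : ℝ) + (f c0 : ℝ) := by
    rw [hnR, mul_add]
    linarith [hεm]
  refine le_trans hfin ?_
  have hcast : ((m' : ℝ) + (f c0 : ℝ)) = ((m' + f c0 : ℕ) : ℝ) := by push_cast; ring
  rw [hcast]
  refine Nat.cast_le.mpr ?_
  calc m' + f c0
      = ((Finset.univ.filter (fun t : Fin n => ¬ Function.Injective (a t))) ∪
        (Finset.univ.filter (fun t : Fin n => Function.Injective (a t) ∧
          ((T t).image (extCol k S d c0)).card = k))).card :=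
        (Finset.card_union_of_disjoint hdisj).symm
    _ ≤ _ := by
        refine Finset.card_le_card ?_
        intro t ht
        simp only [Finset.mem_union, Finset.mem_filter, Finset.mem_univ, true_and] at ht ⊢
        rcases ht with ht | ht
        · exact Or.inl ht
        · exact Or.inr ((hbridge t ht.1).mpr ht.2)
end
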